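/- arXiv:1107.1636 — 2 statements merged into one kernel-verified Lean document; each statement's English description precedes it below -/
import Mathlib

section
/- Conversely, suppose c_0,...,c_n and b_0,...,b_n are nonnegative integers such that Σ_{i=0}^k (-1)^{k-i} c_i ≥ Σ_{i=0}^k (-1)^{k-i} b_i for all 0 ≤ k ≤ n, with equality when k = n. Then there exists a polynomial Q with nonnegative integer coefficients such that Σ_{i=0}^n c_i x^i = Σ_{i=0}^n b_i x^i + (1+x)·Q(x). -/
/-!
Put `d i = c i - b i` and let `q k = ∑_{i ≤ k} (-1)^(k-i) d i` be its alternating partial sums.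
Since `d k = q k + q (k-1)`, the polynomial `∑_{i ≤ n} d i X^i` equals
`(1 + X) ∑_{k < n} q k X^k + q n X^n`. The strong Morse inequalities say exactly that
`q k ≥ 0` for `k ≤ n` and `q n = 0`, so `Q = ∑_{k < n} q k X^k` works.
-/

open Polynomial Finset

section AlternatingPartialSum

variable {R : Type*} [CommRing R]

def alternatingPartialSum (d : ℕ → R) (k : ℕ) : R :=
  ∑ i ∈ range (k + 1), (-1) ^ (k - i) * d i

theorem alternatingPartialSum_zero (d : ℕ → R) : alternatingPartialSum d 0 = d 0 := by
  simp [alternatingPartialSum]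

theorem alternatingPartialSum_succ (d : ℕ → R) (k : ℕ) :
    alternatingPartialSum d (k + 1) = d (k + 1) - alternatingPartialSum d k := by
  rw [alternatingPartialSum, sum_range_succ, Nat.sub_self, pow_zero, one_mul,
    alternatingPartialSum, add_comm, sub_eq_add_neg, ← sum_neg_distrib]
  refine congrArg _ (sum_congr rfl fun i hi => ?_)
  rw [Nat.succ_sub (mem_range_succ_iff.mp hi), pow_succ]
  ring

theorem alternatingPartialSum_sub (f g : ℕ → R) (k : ℕ) :
    alternatingPartialSum (fun i => f i - g i) k =
      alternatingPartialSum f k - alternatingPartialSum g k := by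
  simp only [alternatingPartialSum, mul_sub, sum_sub_distrib]

theorem sum_range_C_mul_X_pow_eq_one_add_X_mul (d : ℕ → R) (n : ℕ) :
    ∑ i ∈ range (n + 1), C (d i) * X ^ i =
      (1 + X) * ∑ k ∈ range n, C (alternatingPartialSum d k) * X ^ k
        + C (alternatingPartialSum d n) * X ^ n := by
  induction n with
  | zero => simp [alternatingPartialSum_zero]
  | succ n ih =>
    rw [sum_range_succ, ih, sum_range_succ, alternatingPartialSum_succ, C_sub]
    ring

end AlternatingPartialSum

/-- Strong Morse inequalities imply the polynomial (Goresky–MacPherson) form of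
the Morse inequalities. -/
theorem stmt2 (n : ℕ) (c b : ℕ → ℕ)
    (hineq : ∀ k ≤ n, ∑ i ∈ range (k+1), (-1 : ℤ)^(k-i) * (b i : ℤ)
        ≤ ∑ i ∈ range (k+1), (-1 : ℤ)^(k-i) * (c i : ℤ))
    (heq : ∑ i ∈ range (n+1), (-1 : ℤ)^(n-i) * (c i : ℤ)
        = ∑ i ∈ range (n+1), (-1 : ℤ)^(n-i) * (b i : ℤ)) :
    ∃ Q : Polynomial ℤ, (∀ i, 0 ≤ Q.coeff i) ∧
      ∑ i ∈ range (n+1), C (c i : ℤ) * X ^ i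
        = ∑ i ∈ range (n+1), C (b i : ℤ) * X ^ i + (1 + X) * Q := by
  set q := alternatingPartialSum fun i => (c i : ℤ) - b i
  have hq : ∀ k, q k = alternatingPartialSum (fun i => (c i : ℤ)) k
      - alternatingPartialSum (fun i => (b i : ℤ)) k :=
    alternatingPartialSum_sub _ _
  have hq_nonneg : ∀ k ≤ n, 0 ≤ q k := fun k hk => by
    rw [hq]
    exact sub_nonneg.mpr (hineq k hk)
  have hq_top : q n = 0 := by
    rw [hq]
    exact sub_eq_zero.mpr heq
  refine ⟨∑ k ∈ range n, C (q k) * X ^ k, fun i => ?_, ?_⟩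
  · rw [finsetSum_coeff]
    refine sum_nonneg fun k hk => ?_
    rw [coeff_C_mul_X_pow]
    split_ifs
    · exact hq_nonneg k (mem_range.mp hk).le
    · exact le_rfl
  · have key : ∑ i ∈ range (n + 1), C ((c i : ℤ) - b i) * X ^ i =
        (1 + X) * ∑ k ∈ range n, C (q k) * X ^ k + C (q n) * X ^ n :=
      sum_range_C_mul_X_pow_eq_one_add_X_mul _ n
    rw [hq_top, map_zero, zero_mul, add_zero] at key
    simp only [C_sub, sub_mul, sum_sub_distrib] at key
    exact sub_eq_iff_eq_add'.mp key
end

section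
/- Let (M, g, J, ω) be a Kähler manifold and F a holomorphic function with f = Re F. Then the commutator of the Lefschetz operator L (wedging with ω) with the adjoint Lie derivative term vanishes on compactly supported forms: [L, 𝓛_{∇f}*] α = (d^c d f) ∧ α = 0, using the Kähler identity [L, δ] = d^c and the pluriharmonicity d^c d f = 0 of f = Re F. -/
/-!
Since `L = ω ∧ ·` commutes with `df ∧ ·`, the commutator of `L` with
`𝓛_{∇f}^* = δ ∘ (df ∧ ·) + (df ∧ ·) ∘ δ` only sees `[L, δ] = d^c`, giving
`d^c ∘ (df ∧ ·) + (df ∧ ·) ∘ d^c`; as `d^c` is an antiderivation this is `(d^c df) ∧ ·`,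
which vanishes by pluriharmonicity.
-/

theorem commutator_mul_left_anticommutator_eq {R : Type*} [Ring R] (δ dc : R → R)
    (ω df α : R) (hKaehler : ∀ a : R, ω * δ a - δ (ω * a) = dc a) (hcomm : Commute ω df) :
    ω * (δ (df * α) + df * δ α) - (δ (df * (ω * α)) + df * δ (ω * α))
      = dc (df * α) + df * dc α := by
  have hswap : df * (ω * α) = ω * (df * α) := by
    rw [← mul_assoc, ← hcomm.eq, mul_assoc]
  calc ω * (δ (df * α) + df * δ α) - (δ (df * (ω * α)) + df * δ (ω * α))
      = (ω * δ (df * α) - δ (ω * (df * α))) + df * (ω * δ α - δ (ω * α)) := by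
        rw [hswap, mul_add, ← mul_assoc ω df, hcomm.eq, mul_assoc, mul_sub df]; abel
    _ = dc (df * α) + df * dc α := by rw [hKaehler, hKaehler]

/-- **`[L, 𝓛_{∇f}^*] = (d^c d f) ∧ · = 0` for `f = Re F` on a Kähler manifold.**
Here `𝓛_{∇f}^* = δ ∘ (df ∧ ·) + (df ∧ ·) ∘ δ`, the Kähler identity `[L, δ] = d^c`
holds, `d^c` is an antiderivation against the 1-form `df`, and `d^c df = 0` by
pluriharmonicity of `f = Re F`. -/
theorem stmt19 (Ω : Type*) [Ring Ω] [Algebra ℝ Ω]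
    (δ dc : Ω →ₗ[ℝ] Ω) (ω df : Ω)
    (hKaehler : ∀ a : Ω, ω * δ a - δ (ω * a) = dc a)
    (hcomm : ∀ x : Ω, ω * x = x * ω)
    (hanti : ∀ a : Ω, dc (df * a) = dc df * a - df * dc a)
    (hpluri : dc df = 0) :
    ∀ α : Ω, (ω * (δ (df * α) + df * δ α) - (δ (df * (ω * α)) + df * δ (ω * α))
        = dc df * α) ∧ dc df * α = 0 := by
  intro α
  refine ⟨?_, by rw [hpluri, zero_mul]⟩
  rw [commutator_mul_left_anticommutator_eq δ dc ω df α hKaehler (hcomm df), hanti,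
    sub_add_cancel]
end
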